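/- Let d ≥ 1, let U ⊆ ℝ^d be open, and let i : U → ℝ^{d+2} be a map of class C¹ with q(i(p)) = −1 for all p ∈ U. Equip U with the Euclidean distance. Then i is a spacelike immersion if and only if the pullback of the metric is positive definite at every point, i.e. for every p ∈ U and every v ∈ ℝ^d with v ≠ 0 one has ⟨Di_p(v), Di_p(v)⟩ > 0. -/

import Mathlib

noncomputable section

/-- The coefficient of the signature-(d,2) quadratic form: +1 on the first `d`
coordinates, −1 on the last two. -/
def eps (d : ℕ) (i : Fin (d + 2)) : ℝ := if (i : ℕ) < d then 1 else -1

/-- The bilinear form ⟨·,·⟩ of signature (d,2) on ℝ^{d+2}. -/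
def bil (d : ℕ) (x y : EuclideanSpace ℝ (Fin (d + 2))) : ℝ := ∑ i, eps d i * x i * y i

/-- The quadratic form q of signature (d,2). -/
def quad (d : ℕ) (x : EuclideanSpace ℝ (Fin (d + 2))) : ℝ := bil d x x
/-- A spacelike immersion from a metric space into AdS^{d+1} = {q = −1}:
a locally Lipschitz map such that, locally, ⟨i(p), i(p')⟩ ≤ −1 − c·d(p,p')². -/
def IsSpacelikeImmersion {H : Type*} [MetricSpace H] (d : ℕ)
    (i : H → EuclideanSpace ℝ (Fin (d + 2))) : Prop :=
  LocallyLipschitz i ∧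
  ∀ p : H, ∃ U ∈ nhds p, ∃ c : ℝ, 0 < c ∧
    ∀ p' ∈ U, ∀ p'' ∈ U, bil d (i p') (i p'') ≤ -1 - c * dist p' p'' ^ 2

/-! On AdS one has `⟨x, y⟩ = -1 - q(x - y) / 2`, so being a spacelike immersion means that,
locally, `q(i p' - i p'') ≥ 2c |p' - p''|²`. Taking `p' = p + v / s, p'' = p` and letting
`s → ∞` gives `q(Di_p v) ≥ 2c |v|²`. Conversely, compactness of the unit sphere turns positive
definiteness of `v ↦ q(Di_p v)` into a bound `q(Di_p v) ≥ C |v|²`, and since a `C¹` map is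
strictly differentiable, `i p' - i p'' = Di_p (p' - p'') + o(|p' - p''|)` uniformly for
`p', p''` near `p`, which keeps half of the constant `C`. -/

open Filter Topology Metric

section

variable {E F : Type*} [NormedAddCommGroup E] [NormedSpace ℝ E]
  [NormedAddCommGroup F] [NormedSpace ℝ F]

lemma ContinuousLinearMap.apply_smul_smul (B : F →L[ℝ] F →L[ℝ] ℝ) (s : ℝ) (x : F) :
    B (s • x) (s • x) = s ^ 2 * B x x := by
  simp only [map_smul, smul_apply, smul_eq_mul]
  ring

lemma ContinuousLinearMap.sub_le_apply_add_add (B : F →L[ℝ] F →L[ℝ] ℝ) (a r : F) :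
    B a a - ‖B‖ * (2 * ‖a‖ * ‖r‖ + ‖r‖ ^ 2) ≤ B (a + r) (a + r) := by
  have har := abs_le.1 (B.le_opNorm₂ a r)
  have hra := abs_le.1 (B.le_opNorm₂ r a)
  have hrr := abs_le.1 (B.le_opNorm₂ r r)
  simp only [map_add, add_apply]
  nlinarith [har.1, hra.1, hrr.1]

theorem isCoercive_of_apply_self_pos [ProperSpace E] {B : E →L[ℝ] E →L[ℝ] ℝ}
    (hB : ∀ v, v ≠ 0 → 0 < B v v) : IsCoercive B := by
  obtain ⟨C, hC, hCB⟩ := (isCompact_sphere (0 : E) 1).exists_forall_le'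
    (f := fun v => B v v) (by fun_prop) fun v hv => hB v (ne_zero_of_mem_unit_sphere ⟨v, hv⟩)
  refine ⟨C, hC, fun v => ?_⟩
  rcases eq_or_ne v 0 with rfl | hv
  · simp
  have hnorm : 0 < ‖v‖ := norm_pos_iff.2 hv
  have hunit := hCB (‖v‖⁻¹ • v) (by simp [norm_smul, hnorm.ne'])
  rw [B.apply_smul_smul, inv_pow, ← div_eq_inv_mul, le_div_iff₀ (by positivity)] at hunit
  linarith

lemma ContDiffOn.locallyLipschitzOn_of_isOpen {f : E → F} {s : Set E} (hs : IsOpen s)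
    (hf : ContDiffOn ℝ 1 f s) : LocallyLipschitzOn s f := fun x hx => by
  obtain ⟨K, t, ht, hft⟩ := (hf.contDiffAt (hs.mem_nhds hx)).exists_lipschitzOnWith
  exact ⟨K, t, mem_nhdsWithin_of_mem_nhds ht, hft⟩

variable (B : F →L[ℝ] F →L[ℝ] ℝ) {f : E → F} {f' : E →L[ℝ] F} {p : E}

theorem HasFDerivAt.mul_sq_norm_le_apply_of_eventually (hf : HasFDerivAt f f' p) {C : ℝ}
    (hC : ∀ᶠ x in 𝓝 p, C * ‖x - p‖ ^ 2 ≤ B (f x - f p) (f x - f p)) (v : E) :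
    C * ‖v‖ ^ 2 ≤ B (f' v) (f' v) := by
  have hlim : Tendsto (fun s : ℝ => B (s • (f (p + s⁻¹ • v) - f p)) (s • (f (p + s⁻¹ • v) - f p)))
      atTop (𝓝 (B (f' v) (f' v))) :=
    ((by fun_prop : Continuous fun y => B y y).tendsto _).comp (hf.lim_real v)
  have hnear : Tendsto (fun s : ℝ => p + s⁻¹ • v) atTop (𝓝 p) := by
    simpa using tendsto_const_nhds.add
      ((tendsto_inv_atTop_zero : Tendsto (fun s : ℝ => s⁻¹) atTop (𝓝 0)).smul_const v)
  refine ge_of_tendsto hlim ?_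
  filter_upwards [hnear.eventually hC, eventually_gt_atTop 0] with s hs hs0
  rw [add_sub_cancel_left, norm_smul, Real.norm_eq_abs, abs_inv, _root_.abs_of_pos hs0] at hs
  calc C * ‖v‖ ^ 2 = s ^ 2 * (C * (s⁻¹ * ‖v‖) ^ 2) := by field_simp
    _ ≤ _ := mul_le_mul_of_nonneg_left hs (by positivity)
    _ = _ := (B.apply_smul_smul s _).symm

theorem HasStrictFDerivAt.exists_eventually_mul_sq_norm_le_apply (hf : HasStrictFDerivAt f f' p)
    (hcoer : IsCoercive (B.bilinearComp f' f')) :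
    ∃ c > 0, ∀ᶠ z in 𝓝 (p, p), c * ‖z.1 - z.2‖ ^ 2 ≤ B (f z.1 - f z.2) (f z.1 - f z.2) := by
  obtain ⟨C, hC, hCf'⟩ := hcoer
  -- the price, in units of `‖z.1 - z.2‖ ^ 2`, of a linearisation error of relative size `ε`
  obtain ⟨ε, hε, hεpos⟩ : ∃ ε, ‖B‖ * (2 * ‖f'‖ * ε + ε ^ 2) ≤ C / 2 ∧ 0 < ε := by
    have hsmall : Tendsto (fun ε : ℝ => ‖B‖ * (2 * ‖f'‖ * ε + ε ^ 2)) (𝓝[>] 0) (𝓝 0) :=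
      tendsto_nhdsWithin_of_tendsto_nhds (by simpa using (by fun_prop :
        Continuous fun ε : ℝ => ‖B‖ * (2 * ‖f'‖ * ε + ε ^ 2)).tendsto 0)
    exact ((hsmall.eventually (ge_mem_nhds (by positivity))).and self_mem_nhdsWithin).exists
  refine ⟨C / 2, by positivity, ?_⟩
  filter_upwards [hf.isLittleO.def hεpos] with z hz
  set w := z.1 - z.2
  set r := f z.1 - f z.2 - f' w
  have hf'w : ‖f' w‖ ≤ ‖f'‖ * ‖w‖ := f'.le_opNorm w
  calc C / 2 * ‖w‖ ^ 2
      ≤ C * ‖w‖ * ‖w‖ - ‖B‖ * (2 * (‖f'‖ * ‖w‖) * (ε * ‖w‖) + (ε * ‖w‖) ^ 2) := by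
        nlinarith [mul_le_mul_of_nonneg_right hε (sq_nonneg ‖w‖)]
    _ ≤ B (f' w) (f' w) - ‖B‖ * (2 * ‖f' w‖ * ‖r‖ + ‖r‖ ^ 2) := by
        gcongr
        · exact hCf' w
    _ ≤ B (f' w + r) (f' w + r) := B.sub_le_apply_add_add _ _
    _ = _ := by rw [add_sub_cancel]

end

def bilCLM (d : ℕ) :
    EuclideanSpace ℝ (Fin (d + 2)) →L[ℝ] EuclideanSpace ℝ (Fin (d + 2)) →L[ℝ] ℝ :=
  ∑ j, eps d j • (ContinuousLinearMap.mul ℝ ℝ).bilinearComp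
    (EuclideanSpace.proj j) (EuclideanSpace.proj j)

@[simp]
lemma bilCLM_apply (d : ℕ) (x y : EuclideanSpace ℝ (Fin (d + 2))) :
    bilCLM d x y = bil d x y := by
  simp [bilCLM, bil, mul_assoc]

lemma bil_comm (d : ℕ) (x y : EuclideanSpace ℝ (Fin (d + 2))) : bil d x y = bil d y x :=
  Finset.sum_congr rfl fun _ _ => by ring

lemma quad_sub (d : ℕ) (x y : EuclideanSpace ℝ (Fin (d + 2))) :
    quad d (x - y) = quad d x - 2 * bil d x y + quad d y := by
  rw [quad, ← bilCLM_apply]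
  simp only [map_sub, sub_apply, bilCLM_apply, bil_comm d y x, quad]
  ring

lemma bil_le_neg_one_sub_iff {d : ℕ} {x y : EuclideanSpace ℝ (Fin (d + 2))}
    (hx : quad d x = -1) (hy : quad d y = -1) (a : ℝ) :
    bil d x y ≤ -1 - a ↔ 2 * a ≤ quad d (x - y) := by
  rw [quad_sub, hx, hy]
  constructor <;> intro h <;> linarith

theorem C1_spacelike_iff_pullback_positive_general (d : ℕ)
    (U : Set (EuclideanSpace ℝ (Fin d))) (hUopen : IsOpen U)
    (i : EuclideanSpace ℝ (Fin d) → EuclideanSpace ℝ (Fin (d + 2)))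
    (hC1 : ContDiffOn ℝ 1 i U)
    (hAdS : ∀ p ∈ U, quad d (i p) = -1) :
    IsSpacelikeImmersion d (fun p : U => i p) ↔
      ∀ p ∈ U, ∀ v : EuclideanSpace ℝ (Fin d), v ≠ 0 →
        0 < bil d (fderiv ℝ i p v) (fderiv ℝ i p v) := by
  have hC1at : ∀ p ∈ U, ContDiffAt ℝ 1 i p := fun p hp => hC1.contDiffAt (hUopen.mem_nhds hp)
  have hbil (p' p'' : U) (a : ℝ) :
      bil d (i p') (i p'') ≤ -1 - a ↔ 2 * a ≤ bilCLM d (i p' - i p'') (i p' - i p'') :=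
    (bil_le_neg_one_sub_iff (hAdS p' p'.2) (hAdS p'' p''.2) a).trans (by rw [quad, bilCLM_apply])
  simp only [← bilCLM_apply]
  refine ⟨fun ⟨_, hexp⟩ p hp v hv => ?_,
    fun hpos => ⟨(hC1.locallyLipschitzOn_of_isOpen hUopen).restrict, fun p => ?_⟩⟩
  · obtain ⟨V, hV, c, hc, hcV⟩ := hexp ⟨p, hp⟩
    have hnear : ∀ᶠ x in 𝓝 p, 2 * c * ‖x - p‖ ^ 2 ≤ bilCLM d (i x - i p) (i x - i p) := by
      have hV' := mem_nhds_subtype_iff_nhdsWithin.1 hV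
      rw [hUopen.nhdsWithin_eq hp] at hV'
      filter_upwards [hV']
      rintro _ ⟨q, hq, rfl⟩
      have := (hbil q ⟨p, hp⟩ _).1 (hcV q hq _ (mem_of_mem_nhds hV))
      rwa [Subtype.dist_eq, dist_eq_norm, ← mul_assoc] at this
    have hderiv := ((hC1at p hp).differentiableAt one_ne_zero).hasFDerivAt
    exact lt_of_lt_of_le (by positivity) (hderiv.mul_sq_norm_le_apply_of_eventually _ hnear v)
  · have hstrict := (hC1at p p.2).hasStrictFDerivAt one_ne_zero
    obtain ⟨c, hc, hnear⟩ := hstrict.exists_eventually_mul_sq_norm_le_apply (bilCLM d)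
      (isCoercive_of_apply_self_pos (hpos p p.2))
    rw [nhds_prod_eq] at hnear
    obtain ⟨t, ht, htc⟩ := eventually_prod_self_iff'.1 hnear
    refine ⟨Subtype.val ⁻¹' t, continuous_subtype_val.continuousAt.preimage_mem_nhds ht,
      c / 2, by positivity, fun p' hp' p'' hp'' => ?_⟩
    rw [hbil, Subtype.dist_eq, dist_eq_norm]
    linarith [htc _ hp' _ hp'']

/-- a C¹ map i : U → AdS^{d+1} on an open set U ⊆ ℝ^d (with the
Euclidean distance) is a spacelike immersion iff the pullback metric
⟨Di_p(v), Di_p(v)⟩ is positive definite at every point. -/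
theorem C1_spacelike_iff_pullback_positive (d : ℕ) (hd : 1 ≤ d)
    (U : Set (EuclideanSpace ℝ (Fin d))) (hUopen : IsOpen U)
    (i : EuclideanSpace ℝ (Fin d) → EuclideanSpace ℝ (Fin (d + 2)))
    (hC1 : ContDiffOn ℝ 1 i U)
    (hAdS : ∀ p ∈ U, quad d (i p) = -1) :
    IsSpacelikeImmersion d (fun p : U => i p) ↔
      ∀ p ∈ U, ∀ v : EuclideanSpace ℝ (Fin d), v ≠ 0 →
        0 < bil d (fderiv ℝ i p v) (fderiv ℝ i p v) :=
  C1_spacelike_iff_pullback_positive_general d U hUopen i hC1 hAdS
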